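/- arXiv:1012.2206 — 5 statements merged into one kernel-verified Lean document; each statement's English description precedes it below -/
import Mathlib

section
/- For all n, m ≥ 1: Σ_{j} Σ_{k} (-1)^{j+k} · binomial(n-j, j) · binomial(m-k, k) · C_{n+m-j-k} = binomial(n+m, n), where C_i denotes the i-th Catalan number and the sums range over 0 ≤ j ≤ ⌊n/2⌋ and 0 ≤ k ≤ ⌊m/2⌋. -/
/-!
Write `T_n c (s) = ∑_k (-1)^k C(n-k,k) c(n-k+s)`, so that the double sum is
`T_m (T_n catalan) 0`. Pascal's rule gives `T_{n+2} c s = T_{n+1} c (s+1) - T_n c (s+1)`,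
the three-term recurrence of Chebyshev polynomials. The ballot differences
`B(a,b,s) = C(a+b+2s, a+s) - C(a+b+2s, a+b+s+1)` satisfy the same recurrence in `a` and
`B(1,b,s) = B(0,b,s+1)`, hence `T_a (B(0,b,·)) = B(a,b,·)`. Since `catalan = B(0,0,·)` and `B` is
symmetric in `a` and `b`, applying this twice gives `T_m (T_n catalan) 0 = B(m,n,0) = C(n+m,n)`.
-/

open Finset

def chebSum {R : Type*} [CommRing R] (c : ℕ → R) (n s : ℕ) : R :=
  ∑ k ∈ range (n / 2 + 1), (-1) ^ k * ((n - k).choose k : R) * c (n - k + s)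

section chebSum

variable {R : Type*} [CommRing R] (c : ℕ → R)

lemma chebSum_eq_sum_range {n N : ℕ} (hN : n / 2 < N) (s : ℕ) :
    chebSum c n s = ∑ k ∈ range N, (-1) ^ k * ((n - k).choose k : R) * c (n - k + s) := by
  refine sum_subset (fun k hk => ?_) (fun k _ hk => ?_)
  · simp only [mem_range] at hk ⊢
    omega
  · rw [Nat.choose_eq_zero_of_lt (by simp only [mem_range] at hk; omega)]
    simp

lemma chebSum_zero (s : ℕ) : chebSum c 0 s = c s := by
  simp [chebSum]

lemma chebSum_one (s : ℕ) : chebSum c 1 s = c (s + 1) := by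
  simp [chebSum, add_comm]

lemma chebSum_add_two (n s : ℕ) :
    chebSum c (n + 2) s = chebSum c (n + 1) (s + 1) - chebSum c n (s + 1) := by
  rw [chebSum_eq_sum_range c (N := n / 2 + 2) (by omega),
    chebSum_eq_sum_range c (n := n + 1) (N := n / 2 + 2) (by omega), chebSum,
    sum_range_succ']
  conv_rhs => rw [sum_range_succ']
  rw [add_sub_right_comm, ← sum_sub_distrib]
  congr 1
  · refine sum_congr rfl fun k hk => ?_
    have hk : k ≤ n := by simp only [mem_range] at hk; omega
    rw [show n + 2 - (k + 1) = n - k + 1 by omega, show n + 1 - (k + 1) = n - k by omega,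
      show n - k + 1 + s = n - k + (s + 1) by omega, Nat.choose_succ_succ']
    push_cast
    ring
  · simp only [pow_zero, Nat.choose_zero_right, Nat.sub_zero, Nat.cast_one, one_mul]
    congr 1
    omega

lemma chebSum_eq_of_recurrence (Q : ℕ → ℕ → R) (h0 : ∀ s, Q 0 s = c s)
    (h1 : ∀ s, Q 1 s = c (s + 1)) (h2 : ∀ n s, Q (n + 2) s = Q (n + 1) (s + 1) - Q n (s + 1))
    (n s : ℕ) : chebSum c n s = Q n s := by
  induction n using Nat.twoStepInduction generalizing s with
  | zero => rw [chebSum_zero, h0]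
  | one => rw [chebSum_one, h1]
  | more n ih ih' => rw [chebSum_add_two, ih, ih', h2]

end chebSum

def ballotDiff (a b s : ℕ) : ℤ :=
  ((a + b + 2 * s).choose (a + s) : ℤ) - ((a + b + 2 * s).choose (a + b + s + 1) : ℤ)

lemma ballotDiff_comm (a b s : ℕ) : ballotDiff a b s = ballotDiff b a s := by
  rw [ballotDiff, ballotDiff, add_comm b a,
    Nat.choose_symm_of_eq_add (show a + b + 2 * s = (a + s) + (b + s) by ring)]

lemma ballotDiff_zero_zero (s : ℕ) : ballotDiff 0 0 s = catalan s := by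
  have hcat : ((s : ℤ) + 1) * catalan s = (2 * s).choose s := by
    exact_mod_cast succ_mul_catalan_eq_centralBinom s
  have hsucc : ((2 * s).choose (s + 1) : ℤ) * (s + 1) = (2 * s).choose s * s := by
    exact_mod_cast (Nat.choose_succ_right_eq (2 * s) s).trans (by rw [two_mul, Nat.add_sub_cancel])
  refine mul_left_cancel₀ (show (s : ℤ) + 1 ≠ 0 by positivity) ?_
  simp only [ballotDiff, zero_add]
  linear_combination -hsucc - hcat

lemma ballotDiff_one_left (b s : ℕ) : ballotDiff 1 b s = ballotDiff 0 b (s + 1) := by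
  have hsymm : (b + 2 * s + 1).choose s = (b + 2 * s + 1).choose (b + s + 1) :=
    Nat.choose_symm_of_eq_add (by ring)
  have h1 := Nat.choose_succ_succ' (b + 2 * s + 1) s
  have h2 := Nat.choose_succ_succ' (b + 2 * s + 1) (b + s + 1)
  simp only [ballotDiff]
  ring_nf at hsymm h1 h2 ⊢
  push_cast [h1, h2, hsymm]
  ring

lemma ballotDiff_add_two_left (a b s : ℕ) :
    ballotDiff (a + 2) b s = ballotDiff (a + 1) b (s + 1) - ballotDiff a b (s + 1) := by
  have h1 := Nat.choose_succ_succ' (a + b + 2 * s + 2) (a + s + 1)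
  have h2 := Nat.choose_succ_succ' (a + b + 2 * s + 2) (a + b + s + 2)
  simp only [ballotDiff]
  ring_nf at h1 h2 ⊢
  push_cast [h1, h2]
  ring

lemma chebSum_ballotDiff (a b s : ℕ) : chebSum (ballotDiff 0 b) a s = ballotDiff a b s :=
  chebSum_eq_of_recurrence _ (fun a s => ballotDiff a b s) (fun _ => rfl)
    (ballotDiff_one_left b) (fun a s => ballotDiff_add_two_left a b s) a s

theorem stmt_5_general (n m : ℕ) :
    ∑ j ∈ Finset.range (n / 2 + 1), ∑ k ∈ Finset.range (m / 2 + 1),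
        (-1 : ℤ) ^ (j + k) * ((n - j).choose j : ℤ) * ((m - k).choose k : ℤ) *
          (catalan (n + m - j - k) : ℤ)
      = ((n + m).choose n : ℤ) := by
  have hinner : chebSum (fun i => (catalan i : ℤ)) n = ballotDiff 0 n := by
    ext s
    simp_rw [← ballotDiff_zero_zero, chebSum_ballotDiff, ballotDiff_comm]
  calc _ = chebSum (chebSum (fun i => (catalan i : ℤ)) n) m 0 := by
          rw [sum_comm]
          refine sum_congr rfl fun k hk => ?_
          rw [chebSum, mul_sum]
          refine sum_congr rfl fun j hj => ?_
          simp only [mem_range] at hj hk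
          rw [show n + m - j - k = n - j + (m - k + 0) by omega, pow_add]
          ring
    _ = ballotDiff m n 0 := by rw [hinner, chebSum_ballotDiff]
    _ = _ := by simpa [ballotDiff, add_comm m n] using (Nat.choose_symm_add (a := n) (b := m)).symm

/-- for n, m ≥ 1,
Σ_j Σ_k (-1)^{j+k} C(n-j,j) C(m-k,k) Cat(n+m-j-k) = C(n+m,n),
sums over 0 ≤ j ≤ ⌊n/2⌋, 0 ≤ k ≤ ⌊m/2⌋. -/
theorem stmt_5 (n m : ℕ) (hn : 1 ≤ n) (hm : 1 ≤ m) :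
    ∑ j ∈ Finset.range (n / 2 + 1), ∑ k ∈ Finset.range (m / 2 + 1),
        (-1 : ℤ) ^ (j + k) * ((n - j).choose j : ℤ) * ((m - k).choose k : ℤ) *
          (catalan (n + m - j - k) : ℤ)
      = ((n + m).choose n : ℤ) :=
  stmt_5_general n m
end

section
/- Define f(k, n) for k ≥ 0, n ≥ 1 by f(0, n) = 1 and f(k, n) = Σ_{l=0}^{k} C_{k-l} · f(l, n-1) for k ≥ 1 (with f(k,0) suitably initialized, e.g. f(k,1) = C_k). Then for each fixed k, the function n ↦ f(k, n) agrees with a polynomial in n of degree k. -/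
/-!
Shifting the index, `f (k+1) (n+1) - f (k+1) n = ∑_{l ≤ k} C_{k+1-l} f l n` for `n ≥ 1`. By strong
induction on `k` the right-hand side is a polynomial in `n` of degree exactly `k`: the term `l = k`
has coefficient `C_1 = 1` and all others have lower degree. Over `ℚ` every polynomial has a discrete
antiderivative (Bernoulli polynomials satisfy `B_{i+1}(x+1) - B_{i+1}(x) = (i+1) x^i`), whose
degree is one more, since the `d`-th iterated forward difference of a degree-`d` polynomial is the
nonzero constant `d! · leadingCoeff`. Hence `f (k+1) ·` is a polynomial of degree `k + 1`.
-/

open Polynomial Finset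

theorem Polynomial.natDegree_eq_of_eval_add_one_sub_eval {R : Type*} [CommRing R]
    [NoZeroDivisors R] [CharZero R] {P S : R[X]} (hS : S ≠ 0)
    (h : ∀ x, P.eval (x + 1) - P.eval x = S.eval x) :
    P.natDegree = S.natDegree + 1 := by
  have hΔ : fwdDiff 1 P.eval = S.eval := _root_.funext h
  have hiter (j : ℕ) : (fwdDiff 1)^[j + 1] P.eval = (fwdDiff 1)^[j] S.eval := by
    rw [Function.iterate_succ_apply, hΔ]
  have top_ne (Q : R[X]) (hQ : Q ≠ 0) : (fwdDiff 1)^[Q.natDegree] Q.eval ≠ 0 := by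
    rw [Q.fwdDiff_iter_degree_eq_factorial]
    intro h0
    simpa [hQ, Nat.factorial_ne_zero] using congrFun h0 0
  have hle : S.natDegree + 1 ≤ P.natDegree := by
    by_contra! hlt
    exact top_ne S hS (hiter _ ▸ fwdDiff_iter_eq_zero_of_degree_lt hlt)
  obtain ⟨j, hj⟩ : ∃ j, P.natDegree = j + 1 := ⟨P.natDegree - 1, by omega⟩
  have hP : P ≠ 0 := ne_zero_of_natDegree_gt (n := 0) (by omega)
  have hge : j ≤ S.natDegree := by
    by_contra! hlt
    exact top_ne P hP (hj ▸ hiter j ▸ fwdDiff_iter_eq_zero_of_degree_lt hlt)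
  omega

theorem Polynomial.exists_eval_add_one_sub_eval (S : ℚ[X]) :
    ∃ P : ℚ[X], ∀ x, P.eval (x + 1) - P.eval x = S.eval x := by
  refine ⟨∑ i ∈ range (S.natDegree + 1), C (S.coeff i / (i + 1)) * bernoulli (i + 1),
    fun x => ?_⟩
  simp only [eval_finsetSum, eval_mul, eval_C, ← sum_sub_distrib, ← mul_sub, add_comm x 1,
    bernoulli_eval_one_add, S.eval_eq_sum_range]
  refine sum_congr rfl fun i _ => ?_
  push_cast
  field_simp
  ring

theorem Polynomial.degree_sum_range_C_mul {R : Type*} [Semiring R] [NoZeroDivisors R]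
    {P : ℕ → R[X]} {c : ℕ → R} {m : ℕ} (hP : ∀ l ≤ m, (P l).degree = l) (hc : c m ≠ 0) :
    (∑ l ∈ range (m + 1), C (c l) * P l).degree = m := by
  have hlow : (∑ l ∈ range m, C (c l) * P l).degree < m := by
    refine (degree_sum_le _ _).trans_lt
      ((Finset.sup_lt_iff (WithBot.bot_lt_coe m)).2 fun l hl => ?_)
    have hlm := mem_range.1 hl
    rw [← smul_eq_C_mul]
    exact (degree_smul_le _ _).trans_lt ((hP l hlm.le).trans_lt (WithBot.coe_lt_coe.2 hlm))
  have htop : (C (c m) * P m).degree = m := by rw [degree_C_mul hc, hP m le_rfl]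
  rw [sum_range_succ, degree_add_eq_right_of_degree_lt (htop ▸ hlow), htop]

theorem exists_degree_eq_succ_of_sub_eq_eval {g : ℕ → ℚ} {S : ℚ[X]} {d : ℕ} (hS : S.degree = d)
    (hg : ∀ n ≥ 1, g (n + 1) - g n = S.eval (n : ℚ)) :
    ∃ P : ℚ[X], P.degree = (d + 1 : ℕ) ∧ ∀ n ≥ 1, g n = P.eval (n : ℚ) := by
  obtain ⟨R, hR⟩ := S.exists_eval_add_one_sub_eval
  have hS0 : S ≠ 0 := fun h => by simp [h] at hS
  refine ⟨R + C (g 1 - R.eval 1), ?_, fun n hn => ?_⟩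
  · rw [degree_eq_iff_natDegree_eq_of_pos d.succ_pos, natDegree_add_C,
      natDegree_eq_of_eval_add_one_sub_eval hS0 hR, natDegree_eq_of_degree_eq_some hS]
  induction n, hn using Nat.le_induction with
  | base => simp
  | succ n hn ih =>
    simp only [eval_add, eval_C] at ih ⊢
    push_cast
    linarith [hR n, hg n hn]

theorem exists_degree_eq_of_catalan_rec (f : ℕ → ℕ → ℕ) (h0 : ∀ n, f 0 n = 1)
    (hrec : ∀ k n, 1 ≤ k → 2 ≤ n →
      f k n = ∑ l ∈ range (k + 1), catalan (k - l) * f l (n - 1)) (k : ℕ) :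
    ∃ P : ℚ[X], P.degree = k ∧ ∀ n ≥ 1, (f k n : ℚ) = P.eval (n : ℚ) := by
  induction k using Nat.strong_induction_on with
  | _ k ih =>
  obtain _ | m := k
  · exact ⟨C 1, degree_C one_ne_zero, fun n _ => by simp [h0]⟩
  choose! P hPdeg hPeval using ih
  refine exists_degree_eq_succ_of_sub_eq_eval
    (S := ∑ l ∈ range (m + 1), C (catalan (m + 1 - l) : ℚ) * P l)
    (degree_sum_range_C_mul (fun l hl => hPdeg l (by omega)) (by simp)) fun n hn => ?_
  rw [hrec (m + 1) (n + 1) (by omega) (by omega), Nat.add_sub_cancel, sum_range_succ,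
    Nat.sub_self, catalan_zero, one_mul, eval_finsetSum]
  push_cast
  rw [add_sub_cancel_right]
  refine sum_congr rfl fun l hl => ?_
  rw [eval_mul, eval_C, hPeval l (by simp at hl; omega) n hn]

theorem stmt_6_general (f : ℕ → ℕ → ℕ)
    (h0 : ∀ n, f 0 n = 1)
    (hrec : ∀ k n, 1 ≤ k → 2 ≤ n →
      f k n = ∑ l ∈ Finset.range (k + 1), catalan (k - l) * f l (n - 1)) :
    ∀ k, ∃ P : Polynomial ℚ, P.natDegree = k ∧ ∀ n, 1 ≤ n → (f k n : ℚ) = P.eval (n : ℚ) := by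
  intro k
  obtain ⟨P, hP, hf⟩ := exists_degree_eq_of_catalan_rec f h0 hrec k
  exact ⟨P, natDegree_eq_of_degree_eq_some hP, hf⟩

/-- with f(0,n) = 1, f(k,1) = C_k and
f(k,n) = Σ_{l=0}^k C_{k-l} f(l,n-1) for k ≥ 1, n ≥ 2, the function n ↦ f(k,n)
agrees (for n ≥ 1) with a polynomial in n of degree k. -/
theorem stmt_6 (f : ℕ → ℕ → ℕ)
    (h0 : ∀ n, f 0 n = 1)
    (h1 : ∀ k, f k 1 = catalan k)
    (hrec : ∀ k n, 1 ≤ k → 2 ≤ n →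
      f k n = ∑ l ∈ Finset.range (k + 1), catalan (k - l) * f l (n - 1)) :
    ∀ k, ∃ P : Polynomial ℚ, P.natDegree = k ∧ ∀ n, 1 ≤ n → (f k n : ℚ) = P.eval (n : ℚ) :=
  stmt_6_general f h0 hrec
end

section
/- If P(t) = Σ_{j=0}^{n} α_j t^j is a polynomial with real coefficients such that Σ_j α_j C_{j+k} = 0 for all k ≥ 0 (equivalently, for k = 0, 1, …, n), then P = 0. -/
/-!
Put `w_i(m) = (2m)! / (m! (m+i+1)!)`, so that `w_0(m) = C_m`, and let `L_i` be the linear functional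
on `ℝ[X]` sending `X^m` to `w_i(m)`. The hypothesis says that `L_0` vanishes on the ideal `(P)`.
Since `w_i(m+1) / w_i(m) → 4`, dividing `L_i(X^k P)` by `w_i(k)` and letting `k → ∞` gives `P(4) = 0`.
The identity `w_i(m+1) - 4 w_i(m) = -(4i+6) w_{i+1}(m)` says `L_i((X - 4) Q) = -(4i+6) L_{i+1}(Q)`,
so writing `P = (X - 4) Q`, the functional `L_{i+1}` vanishes on `(Q)`, and induction on the
degree finishes the proof.
-/

open Filter Topology Polynomial
open scoped Nat

lemma tendsto_div_add_left_of_tendsto_succ_div {u : ℕ → ℝ} {c : ℝ} (hu : ∀ m, u m ≠ 0)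
    (h : Tendsto (fun m => u (m + 1) / u m) atTop (𝓝 c)) (j : ℕ) :
    Tendsto (fun m => u (j + m) / u m) atTop (𝓝 (c ^ j)) := by
  induction j with
  | zero => simp [div_self (hu _)]
  | succ j ih =>
    have hstep := (h.comp (tendsto_add_atTop_nat j)).mul ih
    rw [pow_succ']
    refine hstep.congr fun m => ?_
    simp only [Function.comp_apply, add_comm m j, div_mul_div_cancel₀ (hu (j + m)),
      add_right_comm j 1 m]

lemma catalan_mul_factorial_mul_factorial_succ (m : ℕ) :
    catalan m * (m ! * (m + 1)!) = (2 * m)! := by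
  rw [Nat.factorial_succ, ← Nat.choose_mul_factorial_mul_factorial (n := 2 * m) (k := m) (by omega),
    ← Nat.centralBinom_eq_two_mul_choose, ← succ_mul_catalan_eq_centralBinom,
    show 2 * m - m = m by omega]
  ring

/-- Equivalently `C_m / ((m + 2) (m + 3) ⋯ (m + i + 1))`. -/
noncomputable def catalanWeight (i m : ℕ) : ℝ := (2 * m)! / (m ! * (m + i + 1)!)

lemma catalanWeight_pos (i m : ℕ) : 0 < catalanWeight i m := by
  unfold catalanWeight; positivity

lemma catalanWeight_zero_left (m : ℕ) : catalanWeight 0 m = catalan m := by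
  rw [catalanWeight, add_zero, eq_comm, eq_div_iff (by positivity)]
  exact_mod_cast catalan_mul_factorial_mul_factorial_succ m

lemma catalanWeight_succ_left (i m : ℕ) :
    catalanWeight (i + 1) m = catalanWeight i m / (m + i + 2) := by
  rw [catalanWeight, catalanWeight, ← add_assoc, Nat.factorial_succ (m + i + 1)]
  push_cast
  field_simp
  ring

lemma catalanWeight_succ_right (i m : ℕ) :
    catalanWeight i (m + 1) = 4 * catalanWeight i m - (4 * i + 6) * catalanWeight (i + 1) m := by
  rw [catalanWeight_succ_left, catalanWeight, catalanWeight,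
    show 2 * (m + 1) = 2 * m + 1 + 1 by ring, show m + 1 + i + 1 = (m + i + 1) + 1 by ring,
    Nat.factorial_succ (2 * m + 1), Nat.factorial_succ (2 * m), Nat.factorial_succ m,
    Nat.factorial_succ (m + i + 1)]
  push_cast
  field_simp
  ring

lemma tendsto_catalanWeight_succ_div (i : ℕ) :
    Tendsto (fun m => catalanWeight i (m + 1) / catalanWeight i m) atTop (𝓝 4) := by
  have hinv : Tendsto (fun m : ℕ => ((m : ℝ) + (i + 2))⁻¹) atTop (𝓝 0) :=
    tendsto_inv_atTop_zero.comp (tendsto_atTop_add_const_right _ _ tendsto_natCast_atTop_atTop)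
  have hlim := (hinv.const_mul (4 * i + 6 : ℝ)).const_sub (4 : ℝ)
  rw [mul_zero, sub_zero] at hlim
  refine hlim.congr fun m => ?_
  rw [catalanWeight_succ_right, catalanWeight_succ_left]
  have := (catalanWeight_pos i m).ne'
  field_simp
  ring

noncomputable def catalanFunctional (i : ℕ) : ℝ[X] →ₗ[ℝ] ℝ :=
  lsum fun m => catalanWeight i m • LinearMap.id

lemma catalanFunctional_monomial (i m : ℕ) (a : ℝ) :
    catalanFunctional i (monomial m a) = a * catalanWeight i m := by
  simp [catalanFunctional, mul_comm]

lemma catalanFunctional_X_sub_C_mul (i : ℕ) (p : ℝ[X]) :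
    catalanFunctional i ((X - C 4) * p) = -(4 * i + 6) * catalanFunctional (i + 1) p := by
  induction p using Polynomial.induction_on' with
  | add p q hp hq => rw [mul_add, map_add, map_add, hp, hq, mul_add]
  | monomial m a =>
    rw [sub_mul, X_mul_monomial, C_mul_monomial, map_sub, catalanFunctional_monomial,
      catalanFunctional_monomial, catalanFunctional_monomial, catalanWeight_succ_right]
    ring

lemma tendsto_catalanFunctional_X_pow_mul_div (i : ℕ) (p : ℝ[X]) :
    Tendsto (fun k => catalanFunctional i (X ^ k * p) / catalanWeight i k) atTop
      (𝓝 (p.eval 4)) := by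
  induction p using Polynomial.induction_on' with
  | add p q hp hq => simpa only [mul_add, map_add, add_div, eval_add] using hp.add hq
  | monomial m a =>
    simp only [X_pow_mul_monomial, catalanFunctional_monomial, eval_monomial, mul_div_assoc]
    exact (tendsto_div_add_left_of_tendsto_succ_div (fun m => (catalanWeight_pos i m).ne')
      (tendsto_catalanWeight_succ_div i) m).const_mul a

lemma eq_zero_of_catalanFunctional_X_pow_mul_eq_zero (i : ℕ) (p : ℝ[X])
    (hp : ∀ k, catalanFunctional i (X ^ k * p) = 0) : p = 0 := by
  induction hdeg : p.natDegree using Nat.strong_induction_on generalizing i p with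
  | _ d ih =>
  have hroot : p.IsRoot 4 :=
    tendsto_nhds_unique (tendsto_catalanFunctional_X_pow_mul_div i p) (by simp [hp])
  set q := p /ₘ (X - C 4)
  have hpq : (X - C 4) * q = p := mul_divByMonic_eq_iff_isRoot.mpr hroot
  have hq : ∀ k, catalanFunctional (i + 1) (X ^ k * q) = 0 := by
    intro k
    have hk := hp k
    rw [← hpq, mul_left_comm, catalanFunctional_X_sub_C_mul] at hk
    exact (mul_eq_zero.mp hk).resolve_left (neg_ne_zero.mpr (by positivity))
  by_contra hp0
  have hq0 : q ≠ 0 := by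
    rintro hq0
    rw [hq0, mul_zero] at hpq
    exact hp0 hpq.symm
  have hlt : q.natDegree < d := hdeg ▸ natDegree_lt_natDegree hq0
    (degree_divByMonic_lt p _ hp0 (by rw [degree_X_sub_C]; exact zero_lt_one))
  exact hq0 (ih _ hlt (i + 1) q hq rfl)

/-- if P(t) = Σ_{j=0}^n α_j t^j has real coefficients and
Σ_j α_j C_{j+k} = 0 for all k ≥ 0, then P = 0, i.e. all α_j vanish. -/
theorem stmt_14 (n : ℕ) (α : ℕ → ℝ)
    (h : ∀ k : ℕ, ∑ j ∈ Finset.range (n + 1), α j * (catalan (j + k) : ℝ) = 0) :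
    ∀ j ≤ n, α j = 0 := by
  set p : ℝ[X] := ∑ j ∈ Finset.range (n + 1), monomial j (α j)
  have hp : p = 0 := by
    refine eq_zero_of_catalanFunctional_X_pow_mul_eq_zero 0 p fun k => ?_
    simp only [p, Finset.mul_sum, map_sum, X_pow_mul_monomial, catalanFunctional_monomial,
      catalanWeight_zero_left, h k]
  intro j hj
  simpa [p, finsetSum_coeff, coeff_monomial, Nat.lt_succ_iff.mpr hj] using congrArg (coeff · j) hp
end

section
/- Every near-edge admits a unique factorization into prime near-edges: if E = F_1 · F_2 · … · F_r = G_1 · G_2 · … · G_s are two factorizations of a near-edge E into prime near-edges, then r = s and F_i = G_i for all i. (Here a factorization E = E_1 · E_2 splits E at a lower extremal vertex P_k such that all points of E \ E_i lie strictly above every line through two distinct points of E_i, i = 1,2.) -/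
/-- A near-edge of weight n: n+1 points of ℝ² with strictly increasing x-coordinates,
the first and the last one on the x-axis. -/
structure NearEdge (n : ℕ) where
  pts : Fin (n + 1) → ℝ × ℝ
  mono : StrictMono fun i => (pts i).1
  first : (pts 0).2 = 0
  last : (pts (Fin.last n)).2 = 0

/-- `Q` lies strictly above the line through `A` and `B` (where `A.1 < B.1`). -/
def StrictlyAbove (A B Q : ℝ × ℝ) : Prop :=
  0 < (B.1 - A.1) * (Q.2 - A.2) - (B.2 - A.2) * (Q.1 - A.1)

/-- The piece of `E` between indices `a` and `b` is a factor of `E`: every point of `E`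
outside the piece lies strictly above every line through two distinct points of the piece. -/
def PieceFactor {n : ℕ} (E : NearEdge n) (a b : ℕ) : Prop :=
  ∀ i j : Fin (n + 1), a ≤ i.val → i < j → j.val ≤ b →
    ∀ q : Fin (n + 1), (q.val < a ∨ b < q.val) →
      StrictlyAbove (E.pts i) (E.pts j) (E.pts q)

/-- The piece of `E` between indices `a` and `b` factorizes at the (lower extremal)
vertex of index `c`: all points of the piece outside each half lie strictly above
every line through two distinct points of that half. -/
def PieceSplitsAt {n : ℕ} (E : NearEdge n) (a c b : ℕ) : Prop :=
  a < c ∧ c < b ∧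
  (∀ i j : Fin (n + 1), a ≤ i.val → i < j → j.val ≤ c →
    ∀ q : Fin (n + 1), c < q.val → q.val ≤ b →
      StrictlyAbove (E.pts i) (E.pts j) (E.pts q)) ∧
  (∀ i j : Fin (n + 1), c ≤ i.val → i < j → j.val ≤ b →
    ∀ q : Fin (n + 1), a ≤ q.val → q.val < c →
      StrictlyAbove (E.pts i) (E.pts j) (E.pts q))

/-- The piece of `E` between indices `a` and `b` is prime: it admits no nontrivial
factorization. -/
def PiecePrime {n : ℕ} (E : NearEdge n) (a b : ℕ) : Prop :=
  a < b ∧ ¬ ∃ c, PieceSplitsAt E a c b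

/-- A factorization of the near-edge `E` into prime near-edges, recorded by the
increasing list `L` of cut indices `0 = k₀ < k₁ < … < k_r = n`: each piece is a
factor of `E` and is prime. -/
def IsPrimeFactorization {n : ℕ} (E : NearEdge n) (L : List ℕ) : Prop :=
  L.Chain' (· < ·) ∧ L.head? = some 0 ∧ L.getLast? = some n ∧
    ∀ p ∈ L.zip L.tail, PieceFactor E p.1 p.2 ∧ PiecePrime E p.1 p.2

/-!
Call `c` a cut point of `E` if `E` itself factorizes at `c`, counting the ends `0` and `n` as cut
points. If `Q` lies outside the strip over `[A, C]` and above the chords `AB` and `BC`, it lies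
above `AC`; gluing chords along a factorization therefore shows that every index at which a prime
factorization cuts is a cut point of `E`, while a cut point strictly inside a piece would split that
prime piece. So a prime factorization cuts exactly at the cut points of `E`. Conversely, a split of
the piece between two consecutive cut points would glue into a cut point between them, so the cut
points of `E` do define a prime factorization.
-/

namespace List

variable {α : Type*}

theorem Pairwise.head?_eq_some {r : α → α → Prop} {L : List α} {a : α} (h : L.Pairwise r)
    (ha : a ∈ L) (hmin : ∀ x ∈ L, ¬ r x a) : L.head? = some a := by
  cases L with
  | nil => simp at ha
  | cons y t =>
    rcases mem_cons.mp ha with rfl | ha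
    · rfl
    · exact absurd ((pairwise_cons.mp h).1 a ha) (hmin y mem_cons_self)

variable [LinearOrder α] {L : List α}

theorem Pairwise.getLast?_eq_some {m : α} (h : L.Pairwise (· < ·)) (hm : m ∈ L)
    (hmax : ∀ x ∈ L, x ≤ m) : L.getLast? = some m := by
  rw [← head?_reverse]
  exact (pairwise_reverse.mpr h).head?_eq_some (mem_reverse.mpr hm)
    fun x hx => not_lt.mpr (hmax x (mem_reverse.mp hx))

theorem Pairwise.le_of_getLast?_eq_some {m x : α} (h : L.Pairwise (· < ·))
    (hm : L.getLast? = some m) (hx : x ∈ L) : x ≤ m := by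
  obtain ⟨ys, rfl⟩ := getLast?_eq_some_iff.mp hm
  rcases mem_append.mp hx with hx | hx
  · exact ((pairwise_append.mp h).2.2 x hx m mem_cons_self).le
  · exact (mem_singleton.mp hx).le

theorem Pairwise.mem_zip_tail : ∀ {L : List α}, L.Pairwise (· < ·) → ∀ {p : α × α},
    p ∈ L.zip L.tail → p.1 < p.2 ∧ p.1 ∈ L ∧ p.2 ∈ L ∧ ∀ c ∈ L, ¬ (p.1 < c ∧ c < p.2)
  | [], _, _, hp => by simp at hp
  | [_], _, _, hp => by simp at hp
  | x :: y :: t, h, p, hp => by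
    have hx : ∀ z ∈ y :: t, x < z := (pairwise_cons.mp h).1
    have hy : ∀ z ∈ t, y < z := (pairwise_cons.mp (pairwise_cons.mp h).2).1
    rcases mem_cons.mp (zip_cons_cons ▸ hp) with rfl | hp
    · refine ⟨hx y mem_cons_self, mem_cons_self, by simp, fun c hc ⟨hxc, hcy⟩ => ?_⟩
      rcases mem_cons.mp hc with rfl | hc
      · exact lt_irrefl _ hxc
      rcases mem_cons.mp hc with rfl | hc
      · exact lt_irrefl _ hcy
      · exact lt_asymm hcy (hy c hc)
    · obtain ⟨hlt, h1, h2, hbetween⟩ := (pairwise_cons.mp h).2.mem_zip_tail hp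
      refine ⟨hlt, mem_cons_of_mem _ h1, mem_cons_of_mem _ h2, fun c hc => ?_⟩
      rcases mem_cons.mp hc with rfl | hc
      · exact fun ⟨hpc, _⟩ => lt_asymm hpc (hx p.1 h1)
      · exact hbetween c hc

theorem Pairwise.exists_mem_zip_tail_of_not_mem : ∀ {L : List α}, L.Pairwise (· < ·) →
    ∀ {a b c : α}, a ∈ L → b ∈ L → a < c → c < b → c ∉ L →
    ∃ p ∈ L.zip L.tail, p.1 < c ∧ c < p.2
  | [], _, _, _, _, ha, _, _, _, _ => by simp at ha
  | [_], _, _, _, _, ha, hb, hac, hcb, _ => by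
    simp only [mem_singleton] at ha hb
    exact absurd (hac.trans hcb) (by simp [ha, hb])
  | x :: y :: t, h, a, b, c, ha, hb, hac, hcb, hc => by
    have hx : ∀ z ∈ y :: t, x < z := (pairwise_cons.mp h).1
    have hy : ∀ z ∈ y :: t, y ≤ z := fun z hz => by
      rcases mem_cons.mp hz with rfl | hz
      · exact le_rfl
      · exact ((pairwise_cons.mp (pairwise_cons.mp h).2).1 z hz).le
    rcases lt_or_gt_of_ne (fun hcy : c = y => hc (hcy ▸ by simp)) with hcy | hyc
    · refine ⟨(x, y), by simp, ?_, hcy⟩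
      rcases mem_cons.mp ha with rfl | ha
      · exact hac
      · exact absurd (hy a ha) (not_le.mpr (hac.trans hcy))
    · have hb' : b ∈ y :: t := by
        rcases mem_cons.mp hb with rfl | hb
        · exact absurd ((hx y mem_cons_self).trans (hyc.trans hcb)) (lt_irrefl _)
        · exact hb
      obtain ⟨p, hp, hpc⟩ := (pairwise_cons.mp h).2.exists_mem_zip_tail_of_not_mem
        mem_cons_self hb' hyc hcb (fun h' => hc (mem_cons_of_mem _ h'))
      exact ⟨p, show p ∈ (x, y) :: (y :: t).zip t from mem_cons_of_mem _ hp, hpc⟩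

end List

/- The signed area of `(A, C, Q)`, weighted by `Q.1 - B.1`, is the sum of those of `(A, B, Q)` and
`(B, C, Q)` weighted by `Q.1 - C.1` and `Q.1 - A.1`; for `Q` outside the strip all weights share a
sign. -/
theorem StrictlyAbove.trans {A B C Q : ℝ × ℝ} (hAB : StrictlyAbove A B Q)
    (hBC : StrictlyAbove B C Q) (h₁ : A.1 < B.1) (h₂ : B.1 < C.1) (hQ : Q.1 < A.1 ∨ C.1 < Q.1) :
    StrictlyAbove A C Q := by
  unfold StrictlyAbove at *
  have key : ((C.1 - A.1) * (Q.2 - A.2) - (C.2 - A.2) * (Q.1 - A.1)) * (Q.1 - B.1)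
      = ((B.1 - A.1) * (Q.2 - A.2) - (B.2 - A.2) * (Q.1 - A.1)) * (Q.1 - C.1)
      + ((C.1 - B.1) * (Q.2 - B.2) - (C.2 - B.2) * (Q.1 - B.1)) * (Q.1 - A.1) := by ring
  rcases hQ with hQ | hQ <;> nlinarith

namespace NearEdge

variable {n : ℕ}

def AboveChords (E : NearEdge n) (a b : ℕ) (q : Fin (n + 1)) : Prop :=
  ∀ i j : Fin (n + 1), a ≤ i.val → i < j → j.val ≤ b → StrictlyAbove (E.pts i) (E.pts j) (E.pts q)

def IsCutPoint (E : NearEdge n) (c : ℕ) : Prop :=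
  (∀ q : Fin (n + 1), c < q.val → E.AboveChords 0 c q) ∧
    ∀ q : Fin (n + 1), q.val < c → E.AboveChords c n q

open Classical in
noncomputable def cutPoints (E : NearEdge n) : Finset ℕ :=
  (Finset.range (n + 1)).filter E.IsCutPoint

variable {E : NearEdge n} {a b c : ℕ} {q : Fin (n + 1)}

theorem AboveChords.mono {a' b' : ℕ} (h : E.AboveChords a b q) (ha : a ≤ a') (hb : b' ≤ b) :
    E.AboveChords a' b' q :=
  fun i j hi hij hj => h i j (ha.trans hi) hij (hj.trans hb)

theorem aboveChords_self : E.AboveChords a a q :=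
  fun i j hi hij hj => absurd (Fin.lt_def.mp hij) (by omega)

theorem AboveChords.trans (h₁ : E.AboveChords a c q) (h₂ : E.AboveChords c b q)
    (hq : q.val < a ∨ b < q.val) : E.AboveChords a b q := by
  intro i j hi hij hj
  rcases le_or_gt j.val c with hjc | hcj
  · exact h₁ i j hi hij hjc
  rcases le_or_gt c i.val with hci | hic
  · exact h₂ i j hci hij hj
  set C : Fin (n + 1) := ⟨c, hcj.trans j.isLt⟩
  have hiC : i < C := hic
  have hCj : C < j := hcj
  refine (h₁ i C hi hiC le_rfl).trans (h₂ C j le_rfl hCj hj) (E.mono hiC) (E.mono hCj) ?_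
  rcases hq with hq | hq
  · exact Or.inl (E.mono (show q < i from Fin.lt_def.mpr (by omega)))
  · exact Or.inr (E.mono (show j < q from Fin.lt_def.mpr (by omega)))

theorem isCutPoint_zero : E.IsCutPoint 0 :=
  ⟨fun _ _ => aboveChords_self, fun _ hq => absurd hq (Nat.not_lt_zero _)⟩

theorem isCutPoint_last : E.IsCutPoint n :=
  ⟨fun q hq => absurd q.isLt (by omega), fun _ _ => aboveChords_self⟩

theorem pieceFactor_of_isCutPoint (ha : E.IsCutPoint a) (hb : E.IsCutPoint b) :
    PieceFactor E a b := by
  intro i j hi hij hj q hq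
  rcases hq with hq | hq
  · exact ha.2 q hq i j hi hij (by omega)
  · exact hb.1 q hq i j (Nat.zero_le _) hij hj

theorem pieceSplitsAt_of_isCutPoint (hc : E.IsCutPoint c) (hac : a < c) (hcb : c < b) :
    PieceSplitsAt E a c b :=
  ⟨hac, hcb, fun i j _ hij hj q hq _ => hc.1 q hq i j (Nat.zero_le _) hij hj,
    fun i j hi hij _ q _ hq => hc.2 q hq i j hi hij (by omega)⟩

/- Glue the chords of each half to the chords of `E` beyond `a` or beyond `b`. -/
theorem IsCutPoint.of_pieceSplitsAt (ha : E.IsCutPoint a) (hb : E.IsCutPoint b)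
    (h : PieceSplitsAt E a c b) : E.IsCutPoint c := by
  obtain ⟨hac, hcb, hleft, hright⟩ := h
  constructor
  · intro q hcq
    rcases le_or_gt q.val b with hqb | hbq
    · exact (ha.1 q (hac.trans hcq)).trans (fun i j hi hij hj => hleft i j hi hij hj q hcq hqb)
        (Or.inr hcq)
    · exact (hb.1 q hbq).mono le_rfl hcb.le
  · intro q hqc
    rcases le_or_gt a q.val with haq | hqa
    · exact AboveChords.trans (fun i j hi hij hj => hright i j hi hij hj q haq hqc)
        (hb.2 q (hqc.trans hcb)) (Or.inl hqc)
    · exact (ha.2 q hqa).mono hac.le le_rfl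

theorem PieceFactor.aboveChords (h : PieceFactor E a b) (hq : q.val < a ∨ b < q.val) :
    E.AboveChords a b q :=
  fun i j hi hij hj => h i j hi hij hj q hq

theorem aboveChords_of_head?_eq_some : ∀ {L : List ℕ}, L.Pairwise (· < ·) →
    (∀ p ∈ L.zip L.tail, PieceFactor E p.1 p.2) → ∀ {a K : ℕ}, L.head? = some a → K ∈ L →
    K < q.val → E.AboveChords a K q
  | [], _, _, _, _, _, hK, _ => by simp at hK
  | [x], _, _, _, _, ha, hK, _ => by
    simp only [List.head?_cons, Option.some.injEq, List.mem_singleton] at ha hK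
    exact hK ▸ ha ▸ aboveChords_self
  | x :: y :: t, h, hL, a, K, ha, hK, hKq => by
    simp only [List.head?_cons, Option.some.injEq] at ha
    subst ha
    rcases List.mem_cons.mp hK with rfl | hK
    · exact aboveChords_self
    have hyK : y ≤ K := by
      rcases List.mem_cons.mp hK with rfl | hK
      · exact le_rfl
      · exact ((List.pairwise_cons.mp (List.pairwise_cons.mp h).2).1 K hK).le
    have hchords : E.AboveChords y K q := aboveChords_of_head?_eq_some
      (List.pairwise_cons.mp h).2 (fun p hp => hL p (List.mem_cons_of_mem _ hp)) rfl hK hKq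
    exact (PieceFactor.aboveChords (hL (x, y) (by simp)) (Or.inr (by omega))).trans hchords
      (Or.inr hKq)

theorem aboveChords_of_getLast?_eq_some : ∀ {L : List ℕ}, L.Pairwise (· < ·) →
    (∀ p ∈ L.zip L.tail, PieceFactor E p.1 p.2) → ∀ {m K : ℕ}, L.getLast? = some m → K ∈ L →
    q.val < K → E.AboveChords K m q
  | [], _, _, _, _, _, hK, _ => by simp at hK
  | [x], _, _, _, _, hm, hK, _ => by
    simp only [List.getLast?_singleton, Option.some.injEq, List.mem_singleton] at hm hK
    exact hK ▸ hm ▸ aboveChords_self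
  | x :: y :: t, h, hL, m, K, hm, hK, hqK => by
    rw [List.getLast?_cons_cons] at hm
    have ih : ∀ {K}, K ∈ y :: t → q.val < K → E.AboveChords K m q :=
      aboveChords_of_getLast?_eq_some (List.pairwise_cons.mp h).2
        (fun p hp => hL p (List.mem_cons_of_mem _ hp)) hm
    rcases List.mem_cons.mp hK with rfl | hK
    · have hKy : K < y := (List.pairwise_cons.mp h).1 y List.mem_cons_self
      exact (PieceFactor.aboveChords (hL (K, y) (by simp)) (Or.inl hqK)).trans
        (ih List.mem_cons_self (hqK.trans hKy)) (Or.inl hqK)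
    · exact ih hK hqK

theorem isPrimeFactorization_sort_cutPoints : IsPrimeFactorization E E.cutPoints.sort := by
  have hsort : E.cutPoints.sort.Pairwise (· < ·) := (Finset.sortedLT_sort _).pairwise
  have hmem : ∀ {c}, c ∈ E.cutPoints.sort ↔ c < n + 1 ∧ E.IsCutPoint c := by simp [cutPoints]
  refine ⟨List.isChain_iff_pairwise.mpr hsort,
    hsort.head?_eq_some (hmem.mpr ⟨n.succ_pos, isCutPoint_zero⟩) fun x _ => Nat.not_lt_zero x,
    hsort.getLast?_eq_some (hmem.mpr ⟨n.lt_succ_self, isCutPoint_last⟩)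
      fun x hx => Nat.le_of_lt_succ (hmem.mp hx).1,
    fun p hp => ?_⟩
  obtain ⟨hlt, ha, hb, hbetween⟩ := hsort.mem_zip_tail hp
  refine ⟨pieceFactor_of_isCutPoint (hmem.mp ha).2 (hmem.mp hb).2, hlt, fun ⟨c, hc⟩ => ?_⟩
  refine hbetween c (hmem.mpr ⟨?_, (hmem.mp ha).2.of_pieceSplitsAt (hmem.mp hb).2 hc⟩)
    ⟨hc.1, hc.2.1⟩
  exact hc.2.1.trans (hmem.mp hb).1

end NearEdge

open NearEdge

namespace IsPrimeFactorization

variable {n : ℕ} {E : NearEdge n} {L : List ℕ} {c : ℕ}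

theorem pairwise (hL : IsPrimeFactorization E L) : L.Pairwise (· < ·) :=
  List.isChain_iff_pairwise.mp hL.1

theorem isCutPoint_of_mem (hL : IsPrimeFactorization E L) (hc : c ∈ L) : E.IsCutPoint c :=
  have hfactor : ∀ p ∈ L.zip L.tail, PieceFactor E p.1 p.2 := fun p hp => (hL.2.2.2 p hp).1
  ⟨fun _ hq => aboveChords_of_head?_eq_some hL.pairwise hfactor hL.2.1 hc hq,
    fun _ hq => aboveChords_of_getLast?_eq_some hL.pairwise hfactor hL.2.2.1 hc hq⟩

theorem mem_of_isCutPoint (hL : IsPrimeFactorization E L) (hc : E.IsCutPoint c) (hcn : c ≤ n) :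
    c ∈ L := by
  by_contra hcL
  have h0 : 0 ∈ L := List.mem_of_mem_head? hL.2.1
  have hn : n ∈ L := List.mem_of_getLast? hL.2.2.1
  obtain ⟨p, hp, hpc, hcp⟩ := hL.pairwise.exists_mem_zip_tail_of_not_mem h0 hn
    (Nat.pos_of_ne_zero fun h : c = 0 => hcL (h ▸ h0)) (hcn.lt_of_ne fun h => hcL (h ▸ hn)) hcL
  exact (hL.2.2.2 p hp).2.2 ⟨c, pieceSplitsAt_of_isCutPoint hc hpc hcp⟩

theorem mem_iff (hL : IsPrimeFactorization E L) : c ∈ L ↔ c ∈ E.cutPoints := by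
  simp only [cutPoints, Finset.mem_filter, Finset.mem_range, Nat.lt_succ_iff]
  exact ⟨fun hc => ⟨hL.pairwise.le_of_getLast?_eq_some hL.2.2.1 hc, hL.isCutPoint_of_mem hc⟩,
    fun ⟨hcn, hc⟩ => hL.mem_of_isCutPoint hc hcn⟩

end IsPrimeFactorization

theorem stmt_18_general (n : ℕ) (E : NearEdge n) :
    ∃! L : List ℕ, IsPrimeFactorization E L :=
  ⟨E.cutPoints.sort, isPrimeFactorization_sort_cutPoints, fun _ hL =>
    hL.pairwise.sortedLT.eq_of_mem_iff (Finset.sortedLT_sort _) fun _ => by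
      rw [hL.mem_iff, Finset.mem_sort]⟩

/-- every near-edge admits a unique factorization into prime
near-edges. -/
theorem stmt_18 (n : ℕ) (hn : 1 ≤ n) (E : NearEdge n) :
    ∃! L : List ℕ, IsPrimeFactorization E L :=
  stmt_18_general n E
end

section
/- Up to the natural equivalence (sign pattern of the heights), there are exactly 2^{n−1} convex n-near-edges: convex n-near-edges are classified by tuples (ε_1, …, ε_{n−1}) ∈ {±1}^{n−1} via the representative P_i = (i, ε_i · i(n−i)) for 0 < i < n, P_0 = (0,0), P_n = (n,0), and among these exactly one (the one with all ε_i = −1) factorizes completely as E_1^n into n trivial 1-near-edges, while all others are prime. -/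
/-- A near-edge is convex if all of its points are extremal points of their convex hull. -/
def NearEdge.IsConvex {n : ℕ} (E : NearEdge n) : Prop :=
  ∀ i, E.pts i ∉ convexHull ℝ (E.pts '' {j | j ≠ i})

/-- The standard representative of a convex n-near-edge with sign pattern ε:
P_i = (i, ε_i · i·(n−i)). -/
noncomputable def convexRep (n : ℕ) (ε : Fin (n + 1) → ℝ) : Fin (n + 1) → ℝ × ℝ :=
  fun i => ((i : ℝ), ε i * (i : ℝ) * ((n : ℝ) - (i : ℝ)))

theorem notMem_convexHull_of_lt_of_le {E : Type*} [AddCommGroup E] [Module ℝ E] (f : E →ₗ[ℝ] ℝ) {s : Set E} {p : E} {c : ℝ}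
    (hs : ∀ q ∈ s, f q < c) (hp : c ≤ f p) : p ∉ convexHull ℝ s := fun hmem =>
  not_lt_of_ge hp (convexHull_min hs (convex_halfSpace_lt f.isLinear c) hmem)

theorem notMem_convexHull_of_abs_snd_eq {ι : Type*} (P : ι → ℝ × ℝ) (c : ℝ) (i : ι)
    (hbound : ∀ j, |(P j).2| ≤ (P j).1 * (c - (P j).1))
    (hi : |(P i).2| = (P i).1 * (c - (P i).1))
    (hinj : ∀ j, j ≠ i → (P j).1 ≠ (P i).1) :
    P i ∉ convexHull ℝ (P '' {j | j ≠ i}) := by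
  obtain ⟨s, hs, hsi⟩ : ∃ s : ℝ, |s| ≤ 1 ∧ s * (P i).2 = |(P i).2| := by
    rcases le_total 0 (P i).2 with h | h
    exacts [⟨1, by simp, by simp [abs_of_nonneg h]⟩, ⟨-1, by simp, by simp [abs_of_nonpos h]⟩]
  let f : ℝ × ℝ →ₗ[ℝ] ℝ := s • LinearMap.snd ℝ ℝ ℝ - (c - 2 * (P i).1) • LinearMap.fst ℝ ℝ ℝ
  have hf : ∀ q, f q = s * q.2 - (c - 2 * (P i).1) * q.1 := fun q => by simp [f]
  refine notMem_convexHull_of_lt_of_le f (c := (P i).1 ^ 2) ?_ (by rw [hf, hsi, hi]; linarith)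
  rintro _ ⟨j, hj, rfl⟩
  have hsy : s * (P j).2 ≤ |(P j).2| := by
    calc s * (P j).2 ≤ |s * (P j).2| := le_abs_self _
      _ = |s| * |(P j).2| := abs_mul _ _
      _ ≤ |(P j).2| := mul_le_of_le_one_left (abs_nonneg _) hs
  have hsq : 0 < ((P j).1 - (P i).1) ^ 2 := by
    have := sub_ne_zero.2 (hinj j hj)
    positivity
  rw [hf]
  nlinarith [hbound j]

theorem strictlyAbove_parabola_iff (m a b q : ℝ) :
    StrictlyAbove (a, a ^ 2 + m * a) (b, b ^ 2 + m * b) (q, q ^ 2 + m * q) ↔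
      0 < (b - a) * (q - a) * (q - b) := by
  unfold StrictlyAbove
  ring_nf

theorem piecePrime_succ {n : ℕ} (E : NearEdge n) (k : ℕ) : PiecePrime E k (k + 1) :=
  ⟨k.lt_succ_self, fun ⟨_, hkc, hck, _⟩ => by omega⟩

theorem mem_zip_range_tail {n : ℕ} {p : ℕ × ℕ}
    (hp : p ∈ (List.range (n + 1)).zip (List.range (n + 1)).tail) :
    ∃ k < n, p = (k, k + 1) := by
  obtain ⟨k, hk, rfl⟩ := List.mem_iff_getElem.1 hp
  simp only [List.length_zip, List.length_range, List.length_tail] at hk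
  exact ⟨k, by omega, by simp [add_comm]⟩

theorem isPrimeFactorization_range {n : ℕ} (E : NearEdge n)
    (h : ∀ k < n, PieceFactor E k (k + 1)) : IsPrimeFactorization E (List.range (n + 1)) := by
  refine ⟨(List.isChain_range_succ _ _).2 fun m _ => m.lt_succ_self,
    by simp [List.head?_range], by simp [List.getLast?_range], fun p hp => ?_⟩
  obtain ⟨k, hk, rfl⟩ := mem_zip_range_tail hp
  exact ⟨h k hk, piecePrime_succ E k⟩

theorem piecePrime_zero_of_snd_pos {n : ℕ} (E : NearEdge n) (m : Fin (n + 1))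
    (hm : 0 < (E.pts m).2) : PiecePrime E 0 n := by
  have hm0 : (0 : Fin (n + 1)) < m :=
    lt_of_le_of_ne (Fin.zero_le m) fun h => by simp [← h, E.first] at hm
  have hmn : m < Fin.last n :=
    lt_of_le_of_ne (Fin.le_last m) fun h => by simp [h, E.last] at hm
  have hx0 := E.mono hm0
  have hxn := E.mono hmn
  refine ⟨hm0.trans hmn, fun ⟨c, hc0, hcn, hleft, hright⟩ => ?_⟩
  rcases le_or_gt m.val c with hmc | hcm
  · have := hleft 0 m le_rfl hm0 hmc (Fin.last n) hcn le_rfl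
    simp only [StrictlyAbove, E.first, E.last] at this
    nlinarith
  · have := hright m (Fin.last n) hcm.le hmn le_rfl 0 le_rfl hc0
    simp only [StrictlyAbove, E.first, E.last] at this
    nlinarith

section ConvexRep

variable {n : ℕ} {ε : Fin (n + 1) → ℝ}

theorem exists_nearEdge_pts_eq_convexRep (n : ℕ) (ε : Fin (n + 1) → ℝ) :
    ∃ E : NearEdge n, E.pts = convexRep n ε :=
  ⟨⟨convexRep n ε, fun _ _ h => by simpa [convexRep] using h, by simp [convexRep],
    by simp [convexRep]⟩, rfl⟩

theorem abs_convexRep_snd (hε : ∀ i : Fin (n + 1), 0 < i.val → i.val < n → ε i = 1 ∨ ε i = -1)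
    (j : Fin (n + 1)) :
    |(convexRep n ε j).2| = (j : ℝ) * (n - j) := by
  have hjn : (j : ℝ) ≤ n := by exact_mod_cast j.is_le
  rcases Nat.eq_zero_or_pos j.val with hj | hj
  · simp [convexRep, hj]
  rcases j.is_le.lt_or_eq with hjn' | hjn'
  · have hεj : |ε j| = 1 := by rcases hε j hj hjn' with h | h <;> simp [h]
    rw [convexRep, mul_assoc, abs_mul, hεj, one_mul,
      abs_of_nonneg (mul_nonneg (Nat.cast_nonneg _) (sub_nonneg.2 hjn))]
  · simp [convexRep, hjn']

theorem isConvex_of_pts_eq_convexRep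
    (hε : ∀ i : Fin (n + 1), 0 < i.val → i.val < n → ε i = 1 ∨ ε i = -1)
    {E : NearEdge n} (hE : E.pts = convexRep n ε) : E.IsConvex := by
  intro i
  rw [hE]
  refine notMem_convexHull_of_abs_snd_eq _ n i (fun j => (abs_convexRep_snd hε j).le)
    (abs_convexRep_snd hε i) fun j hj h => hj ?_
  exact Fin.ext (by simpa [convexRep] using h)

theorem convexRep_eq_parabola (hε : ∀ i : Fin (n + 1), 0 < i.val → i.val < n → ε i = -1)
    (j : Fin (n + 1)) : convexRep n ε j = ((j : ℝ), (j : ℝ) ^ 2 + (-n) * j) := by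
  rcases Nat.eq_zero_or_pos j.val with hj | hj
  · simp [convexRep, hj]
  rcases j.is_le.lt_or_eq with hjn | hjn
  · simp only [convexRep, hε j hj hjn, Prod.mk.injEq, true_and]
    ring
  · simp [convexRep, hjn, sq]

theorem pieceFactor_succ_of_pts_eq_convexRep
    (hε : ∀ i : Fin (n + 1), 0 < i.val → i.val < n → ε i = -1)
    {E : NearEdge n} (hE : E.pts = convexRep n ε) (k : ℕ) : PieceFactor E k (k + 1) := by
  intro i j hki hij hjk q hq
  have hi : (i : ℝ) = k := by norm_cast; have := Fin.lt_def.1 hij; omega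
  have hj : (j : ℝ) = k + 1 := by norm_cast; have := Fin.lt_def.1 hij; omega
  rw [hE, convexRep_eq_parabola hε, convexRep_eq_parabola hε, convexRep_eq_parabola hε,
    strictlyAbove_parabola_iff, hi, hj]
  rcases hq with hq | hq
  · have hq' : (q : ℝ) + 1 ≤ k := by exact_mod_cast hq
    nlinarith
  · have hq' : (k : ℝ) + 2 ≤ q := by exact_mod_cast hq
    nlinarith

theorem snd_convexRep_pos {m : Fin (n + 1)} (hm0 : 0 < m.val) (hmn : m.val < n) (hεm : ε m = 1) :
    0 < (convexRep n ε m).2 := by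
  have h0 : (0 : ℝ) < m := by exact_mod_cast hm0
  have hn : (m : ℝ) < n := by exact_mod_cast hmn
  simp only [convexRep, hεm, one_mul]
  exact mul_pos h0 (sub_pos.2 hn)

end ConvexRep

section SignPatterns

open Finset

noncomputable def signChoices (n : ℕ) (i : Fin (n + 1)) : Finset ℝ :=
  if 0 < i.val ∧ i.val < n then {1, -1} else {1}

theorem card_signChoices (n : ℕ) (i : Fin (n + 1)) :
    #(signChoices n i) = if 0 < i.val ∧ i.val < n then 2 else 1 := by
  unfold signChoices
  split_ifs
  · exact card_pair (by norm_num)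
  · rfl

theorem card_filter_interior (n : ℕ) :
    #{i : Fin (n + 1) | 0 < i.val ∧ i.val < n} = n - 1 := by
  have : ({i : Fin (n + 1) | 0 < i.val ∧ i.val < n} : Finset _) = Ioo 0 (Fin.last n) := by
    ext i
    simp only [mem_filter, mem_univ, true_and, mem_Ioo, Fin.lt_def, Fin.val_zero, Fin.val_last]
  rw [this, Fin.card_Ioo]
  simp

theorem setOf_signPattern_eq_piFinset (n : ℕ) :
    {ε : Fin (n + 1) → ℝ | (∀ i : Fin (n + 1), 0 < i.val → i.val < n → (ε i = 1 ∨ ε i = -1)) ∧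
      ∀ i : Fin (n + 1), i.val = 0 ∨ i.val = n → ε i = 1} = Fintype.piFinset (signChoices n) := by
  ext ε
  simp only [Set.mem_ofPred_eq, mem_coe, Fintype.mem_piFinset, signChoices]
  refine ⟨fun ⟨hin, hend⟩ i => ?_, fun h => ⟨fun i h0 hn => ?_, fun i hi => ?_⟩⟩
  · split_ifs with hi
    · simpa using hin i hi.1 hi.2
    · simpa using hend i (by omega)
  · have hi := h i
    rwa [if_pos ⟨h0, hn⟩, mem_insert, mem_singleton] at hi
  · have hi' := h i
    rwa [if_neg (by omega), mem_singleton] at hi'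

theorem ncard_setOf_signPattern (n : ℕ) :
    {ε : Fin (n + 1) → ℝ | (∀ i : Fin (n + 1), 0 < i.val → i.val < n → (ε i = 1 ∨ ε i = -1)) ∧
      ∀ i : Fin (n + 1), i.val = 0 ∨ i.val = n → ε i = 1}.ncard = 2 ^ (n - 1) := by
  rw [setOf_signPattern_eq_piFinset, Set.ncard_coe_finset, Fintype.card_piFinset]
  simp only [card_signChoices, prod_ite, prod_const, one_pow, mul_one, card_filter_interior]

end SignPatterns

theorem stmt_19_general (n : ℕ) :
    {ε : Fin (n + 1) → ℝ | (∀ i : Fin (n + 1), 0 < i.val → i.val < n →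
          (ε i = 1 ∨ ε i = -1)) ∧ ∀ i : Fin (n + 1), i.val = 0 ∨ i.val = n → ε i = 1}.ncard
        = 2 ^ (n - 1) ∧
      ∀ ε : Fin (n + 1) → ℝ,
        (∀ i : Fin (n + 1), 0 < i.val → i.val < n → (ε i = 1 ∨ ε i = -1)) →
        (∃ E : NearEdge n, E.pts = convexRep n ε) ∧
        ∀ E : NearEdge n, E.pts = convexRep n ε →
          E.IsConvex ∧
          ((∀ i : Fin (n + 1), 0 < i.val → i.val < n → ε i = -1) →
            IsPrimeFactorization E (List.range (n + 1))) ∧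
          ((∃ i : Fin (n + 1), 0 < i.val ∧ i.val < n ∧ ε i = 1) →
            PiecePrime E 0 n) := by
  refine ⟨ncard_setOf_signPattern n, fun ε hε => ⟨exists_nearEdge_pts_eq_convexRep n ε,
    fun E hE => ⟨isConvex_of_pts_eq_convexRep hε hE, fun hall => ?_, ?_⟩⟩⟩
  · exact isPrimeFactorization_range E fun k _ => pieceFactor_succ_of_pts_eq_convexRep hall hE k
  · rintro ⟨m, hm0, hmn, hεm⟩
    exact piecePrime_zero_of_snd_pos E m (hE ▸ snd_convexRep_pos hm0 hmn hεm)

/-- convex n-near-edges are classified by the 2^{n-1} sign patterns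
(ε_1,…,ε_{n−1}) ∈ {±1}^{n−1} via the representative P_i = (i, ε_i·i(n−i)); each such
representative is a convex near-edge; the one with all ε_i = −1 factorizes completely
into n trivial 1-near-edges, and all the others are prime. -/
theorem stmt_19 (n : ℕ) (hn : 1 ≤ n) :
    {ε : Fin (n + 1) → ℝ | (∀ i : Fin (n + 1), 0 < i.val → i.val < n →
          (ε i = 1 ∨ ε i = -1)) ∧ ∀ i : Fin (n + 1), i.val = 0 ∨ i.val = n → ε i = 1}.ncard
        = 2 ^ (n - 1) ∧
      ∀ ε : Fin (n + 1) → ℝ,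
        (∀ i : Fin (n + 1), 0 < i.val → i.val < n → (ε i = 1 ∨ ε i = -1)) →
        (∃ E : NearEdge n, E.pts = convexRep n ε) ∧
        ∀ E : NearEdge n, E.pts = convexRep n ε →
          E.IsConvex ∧
          ((∀ i : Fin (n + 1), 0 < i.val → i.val < n → ε i = -1) →
            IsPrimeFactorization E (List.range (n + 1))) ∧
          ((∃ i : Fin (n + 1), 0 < i.val ∧ i.val < n ∧ ε i = 1) →
            PiecePrime E 0 n) :=
  stmt_19_general n
end
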